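/- Bound hypothesis property: if t is a normal simply typed λ-term (with types built from atoms, →, ∧, and an ex-falso operator efq_P : ⊥ → P for atomic P ≠ ⊥), with x₁:A₁, ..., xₙ:Aₙ ⊢ t : A, and z : B is a variable occurring bound in t, then either B is a proper subformula of a prime factor of A, or B is a strong subformula of some Aᵢ. -/
import Mathlib


/-- Propositional formulas: atoms, ⊥, implication, conjunction. -/
inductive Formula : Type where
  | atom : Nat → Formula
  | bot  : Formula
  | imp  : Formula → Formula → Formula
  | conj : Formula → Formula → Formula
deriving DecidableEq

/-- A formula is prime if it is not a conjunction. -/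
def Formula.IsPrime : Formula → Prop
  | .conj _ _ => False
  | _ => True

/-- Atomic formulas (atoms and ⊥). -/
def Formula.IsAtomic : Formula → Prop
  | .atom _ => True
  | .bot => True
  | _ => False

/-- Subformula relation. -/
inductive Subformula : Formula → Formula → Prop where
  | refl (A : Formula) : Subformula A A
  | impL : Subformula A B → Subformula A (Formula.imp B C)
  | impR : Subformula A C → Subformula A (Formula.imp B C)
  | conjL : Subformula A B → Subformula A (Formula.conj B C)
  | conjR : Subformula A C → Subformula A (Formula.conj B C)

/-- Proper subformula: subformula and not equal. -/
def ProperSub (A B : Formula) : Prop := Subformula A B ∧ A ≠ B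

/-- B is a strong subformula of A: a proper subformula of some prime
proper subformula of A. -/
def StrongSub (B A : Formula) : Prop :=
  ∃ P, Formula.IsPrime P ∧ ProperSub P A ∧ ProperSub B P

/-- `ConjList A l` : A is the conjunction of the (nonempty) list of formulas l. -/
inductive ConjList : Formula → List Formula → Prop where
  | single (A : Formula) : ConjList A [A]
  | conj : ConjList A l → ConjList B m → ConjList (Formula.conj A B) (l ++ m)

/-- P is a prime factor of A: A is a conjunction of prime formulas among which P. -/
def PrimeFactor (P A : Formula) : Prop :=
  ∃ l, ConjList A l ∧ (∀ Q ∈ l, Formula.IsPrime Q) ∧ P ∈ l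

/-- Number of symbols of a formula. -/
def Formula.size : Formula → Nat
  | .atom _ => 1
  | .bot => 1
  | .imp A B => A.size + B.size + 1
  | .conj A B => A.size + B.size + 1

/-- The canonical list of prime factors of a formula. -/
def primeFactors : Formula → List Formula
  | .conj A B => primeFactors A ++ primeFactors B
  | A => [A]
/-- Simply typed λ-terms (de Bruijn indices) with pairs, projections and efq. -/
inductive Term : Type where
  | var : Nat → Term
  | lam : Formula → Term → Term
  | app : Term → Term → Term
  | pair : Term → Term → Term
  | proj : Bool → Term → Term
  | efq : Formula → Term → Term
deriving DecidableEq

/-- Lift a renaming under a binder. -/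
def liftF (f : Nat → Nat) : Nat → Nat
  | 0 => 0
  | n+1 => f n + 1

def Term.rename (f : Nat → Nat) : Term → Term
  | .var n => .var (f n)
  | .lam A t => .lam A (t.rename (liftF f))
  | .app t u => .app (t.rename f) (u.rename f)
  | .pair t u => .pair (t.rename f) (u.rename f)
  | .proj b t => .proj b (t.rename f)
  | .efq A t => .efq A (t.rename f)

/-- Capture-avoiding substitution of `s` for variable `k` (other variables
above `k` are shifted down). -/
def Term.subst (k : Nat) (s : Term) : Term → Term
  | .var n => if n = k then s else if k < n then .var (n-1) else .var n
  | .lam A t => .lam A (Term.subst (k+1) (s.rename Nat.succ) t)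
  | .app t u => .app (Term.subst k s t) (Term.subst k s u)
  | .pair t u => .pair (Term.subst k s t) (Term.subst k s u)
  | .proj b t => .proj b (Term.subst k s t)
  | .efq A t => .efq A (Term.subst k s t)

/-- `FreeIn n t`: the variable `n` occurs free in `t`. -/
def FreeIn (n : Nat) : Term → Prop
  | .var m => m = n
  | .lam _ t => FreeIn (n+1) t
  | .app t u => FreeIn n t ∨ FreeIn n u
  | .pair t u => FreeIn n t ∨ FreeIn n u
  | .proj _ t => FreeIn n t
  | .efq _ t => FreeIn n t

/-- Typing of simply typed λ-terms. -/
inductive Typing : List Formula → Term → Formula → Prop where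
  | var : Γ[n]? = some A → Typing Γ (.var n) A
  | lam : Typing (A::Γ) t B → Typing Γ (.lam A t) (.imp A B)
  | app : Typing Γ t (.imp A B) → Typing Γ u A → Typing Γ (.app t u) B
  | pair : Typing Γ t A → Typing Γ u B → Typing Γ (.pair t u) (.conj A B)
  | projL : Typing Γ t (.conj A B) → Typing Γ (.proj false t) A
  | projR : Typing Γ t (.conj A B) → Typing Γ (.proj true t) B
  | efq : P.IsAtomic → P ≠ .bot → Typing Γ t .bot → Typing Γ (.efq P t) P

/-- β- and projection-reduction, closed under all term contexts. -/
inductive Red : Term → Term → Prop where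
  | beta : Red (.app (.lam A t) u) (t.subst 0 u)
  | projL : Red (.proj false (.pair t u)) t
  | projR : Red (.proj true (.pair t u)) u
  | lam : Red t t' → Red (.lam A t) (.lam A t')
  | appL : Red t t' → Red (.app t u) (.app t' u)
  | appR : Red u u' → Red (.app t u) (.app t u')
  | pairL : Red t t' → Red (.pair t u) (.pair t' u)
  | pairR : Red u u' → Red (.pair t u) (.pair t u')
  | proj : Red t t' → Red (.proj b t) (.proj b t')
  | efq : Red t t' → Red (.efq A t) (.efq A t')
/-- `HasLam B t`: some λ-abstraction in `t` binds a variable of type `B`. -/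
def HasLam (B : Formula) : Term → Prop
  | .var _ => False
  | .lam A t => A = B ∨ HasLam B t
  | .app t u => HasLam B t ∨ HasLam B u
  | .pair t u => HasLam B t ∨ HasLam B u
  | .proj _ t => HasLam B t
  | .efq _ t => HasLam B t
/-! ### Auxiliary development -/

theorem sub_trans {A B C : Formula} (h1 : Subformula A B) (h2 : Subformula B C) :
    Subformula A C := by
  induction h2 with
  | refl => exact h1
  | impL _ ih => exact .impL ih
  | impR _ ih => exact .impR ih
  | conjL _ ih => exact .conjL ih
  | conjR _ ih => exact .conjR ih

theorem sub_size {A B : Formula} (h : Subformula A B) : A.size ≤ B.size := by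
  induction h with
  | refl => exact le_refl _
  | impL _ ih => simp [Formula.size]; omega
  | impR _ ih => simp [Formula.size]; omega
  | conjL _ ih => simp [Formula.size]; omega
  | conjR _ ih => simp [Formula.size]; omega

theorem sub_size_lt {A B : Formula} (h : Subformula A B) (hne : A ≠ B) :
    A.size < B.size := by
  cases h with
  | refl => exact absurd rfl hne
  | impL h' => have := sub_size h'; simp [Formula.size]; omega
  | impR h' => have := sub_size h'; simp [Formula.size]; omega
  | conjL h' => have := sub_size h'; simp [Formula.size]; omega
  | conjR h' => have := sub_size h'; simp [Formula.size]; omega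

theorem properSub_of {A B : Formula} (h : Subformula A B) (hlt : A.size < B.size) :
    ProperSub A B := ⟨h, fun e => by subst e; omega⟩

theorem conjList_sub {A : Formula} {l : List Formula} (h : ConjList A l) :
    ∀ Q ∈ l, Subformula Q A := by
  induction h with
  | single A => intro Q hQ; simp at hQ; subst hQ; exact .refl _
  | conj _ _ ih1 ih2 =>
    intro Q hQ
    rcases List.mem_append.mp hQ with h' | h'
    · exact .conjL (ih1 Q h')
    · exact .conjR (ih2 Q h')

theorem pf_conjList (A : Formula) : ConjList A (primeFactors A) := by
  induction A with
  | atom n => exact .single _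
  | bot => exact .single _
  | imp A B _ _ => exact .single _
  | conj A B ih1 ih2 => exact .conj ih1 ih2

theorem pf_prime (A : Formula) : ∀ Q ∈ primeFactors A, Q.IsPrime := by
  induction A with
  | atom n => intro Q hQ; simp [primeFactors] at hQ; subst hQ; trivial
  | bot => intro Q hQ; simp [primeFactors] at hQ; subst hQ; trivial
  | imp A B _ _ => intro Q hQ; simp [primeFactors] at hQ; subst hQ; trivial
  | conj A B ih1 ih2 =>
    intro Q hQ
    rcases List.mem_append.mp hQ with h' | h'
    · exact ih1 Q h'
    · exact ih2 Q h'

theorem conjList_prime_eq {A : Formula} {l : List Formula} (h : ConjList A l)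
    (hpr : ∀ Q ∈ l, Formula.IsPrime Q) : l = primeFactors A := by
  induction h with
  | single A =>
    have hA : A.IsPrime := hpr A (by simp)
    cases A with
    | atom n => rfl
    | bot => rfl
    | imp A B => rfl
    | conj A B => exact hA.elim
  | conj h1 h2 ih1 ih2 =>
    have e1 := ih1 (fun Q hQ => hpr Q (List.mem_append.mpr (Or.inl hQ)))
    have e2 := ih2 (fun Q hQ => hpr Q (List.mem_append.mpr (Or.inr hQ)))
    show _ = primeFactors _ ++ primeFactors _
    rw [e1, e2]

theorem primeFactor_iff_mem {P A : Formula} :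
    PrimeFactor P A ↔ P ∈ primeFactors A := by
  constructor
  · rintro ⟨l, hc, hpr, hm⟩; rwa [conjList_prime_eq hc hpr] at hm
  · intro hm; exact ⟨primeFactors A, pf_conjList A, pf_prime A, hm⟩

theorem primeFactor_sub {P A : Formula} (h : PrimeFactor P A) :
    Subformula P A ∧ P.IsPrime := by
  obtain ⟨l, hc, hpr, hm⟩ := h
  exact ⟨conjList_sub hc P hm, hpr P hm⟩

theorem prime_factor_self {A : Formula} (h : A.IsPrime) : PrimeFactor A A :=
  ⟨[A], .single A, by intro Q hQ; simp at hQ; subst hQ; exact h, by simp⟩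

/-- Neutral shape: headed by var, app, or proj. -/
def Neu : Term → Prop
  | .var _ => True
  | .app _ _ => True
  | .proj _ _ => True
  | _ => False

def sizeT : Term → Nat
  | .var _ => 1
  | .lam _ t => sizeT t + 1
  | .app t u => sizeT t + sizeT u + 1
  | .pair t u => sizeT t + sizeT u + 1
  | .proj _ t => sizeT t + 1
  | .efq _ t => sizeT t + 1

/-- The conclusion of the main statement. -/
def Conc (Γ : List Formula) (A B : Formula) : Prop :=
  (∃ P, PrimeFactor P A ∧ ProperSub B P) ∨ ∃ Ai ∈ Γ, StrongSub B Ai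

theorem neutral_aux (n : Nat)
    (IH : ∀ t, sizeT t < n → ∀ Γ A B, Typing Γ t A → (∀ u, ¬ Red t u) →
      HasLam B t → Conc Γ A B) (Γ : List Formula) :
    ∀ t, ∀ C, sizeT t ≤ n → Typing Γ t C → (∀ u, ¬ Red t u) → Neu t →
      (∃ Aj ∈ Γ, Subformula C Aj) ∧
      (∀ B, HasLam B t → ∃ Aj ∈ Γ, StrongSub B Aj) := by
  intro t
  induction t with
  | var m =>
    intro C _ ht _ _
    refine ⟨⟨C, ?_, .refl C⟩, fun B hb => hb.elim⟩
    cases ht with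
    | var h => exact List.mem_of_getElem? h
  | lam A0 s ihs => intro C _ _ _ hneu; exact hneu.elim
  | app u v ihu ihv =>
    intro C hle ht hnf _hneu0
    cases ht with
    | app htu htv =>
      rename_i D
      have hnf_u : ∀ u', ¬ Red u u' := fun u' r => hnf _ (Red.appL r)
      have hnf_v : ∀ v', ¬ Red v v' := fun v' r => hnf _ (Red.appR r)
      have hneu_u : Neu u := by
        cases u with
        | lam A0 s => exact absurd Red.beta (hnf _)
        | pair a b => cases htu
        | efq P s => cases htu with | efq hP _ _ => exact hP
        | var _ => trivial
        | app _ _ => trivial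
        | proj _ _ => trivial
      have hleu : sizeT u ≤ n := by simp [sizeT] at hle; omega
      obtain ⟨⟨Aj, hmem, hsubAj⟩, hlam_u⟩ := ihu (.imp D C) hleu htu hnf_u hneu_u
      constructor
      · exact ⟨Aj, hmem, sub_trans (.impR (.refl C)) hsubAj⟩
      · intro B hb
        rcases hb with hb | hb
        · exact hlam_u B hb
        · have hlev : sizeT v < n := by simp [sizeT] at hle; omega
          rcases IH v hlev Γ D B htv hnf_v hb with ⟨P, hPF, hBP⟩ | h
          · obtain ⟨hPD, hPpr⟩ := primeFactor_sub hPF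
            refine ⟨Aj, hmem, P, hPpr, properSub_of
              (sub_trans hPD (sub_trans (.impL (.refl D)) hsubAj)) ?_, hBP⟩
            have h1 := sub_size hPD
            have h2 := sub_size hsubAj
            simp [Formula.size] at h2 ⊢
            omega
          · exact h
  | pair u v ihu ihv => intro C _ _ _ hneu; exact hneu.elim
  | proj b u ihu =>
    intro C hle ht hnf _hneu0
    have hleu : sizeT u ≤ n := by simp [sizeT] at hle; omega
    have hnf_u : ∀ u', ¬ Red u u' := fun u' r => hnf _ (Red.proj r)
    cases ht with
    | projL htu =>
      rename_i C2
      have hneu_u : Neu u := by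
        cases u with
        | lam A0 s => cases htu
        | pair a b' => exact absurd Red.projL (hnf _)
        | efq P s => cases htu with | efq hP _ _ => exact hP
        | var _ => trivial
        | app _ _ => trivial
        | proj _ _ => trivial
      obtain ⟨⟨Aj, hmem, hsubAj⟩, hlam_u⟩ := ihu (.conj C C2) hleu htu hnf_u hneu_u
      exact ⟨⟨Aj, hmem, sub_trans (.conjL (.refl C)) hsubAj⟩, fun B hb => hlam_u B hb⟩
    | projR htu =>
      rename_i C1
      have hneu_u : Neu u := by
        cases u with
        | lam A0 s => cases htu
        | pair a b' => exact absurd Red.projR (hnf _)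
        | efq P s => cases htu with | efq hP _ _ => exact hP
        | var _ => trivial
        | app _ _ => trivial
        | proj _ _ => trivial
      obtain ⟨⟨Aj, hmem, hsubAj⟩, hlam_u⟩ := ihu (.conj C1 C) hleu htu hnf_u hneu_u
      exact ⟨⟨Aj, hmem, sub_trans (.conjR (.refl C)) hsubAj⟩, fun B hb => hlam_u B hb⟩
  | efq P s ihs => intro C _ _ _ hneu; exact hneu.elim

theorem main_aux : ∀ n t (Γ : List Formula) A B, sizeT t ≤ n → Typing Γ t A →
    (∀ u, ¬ Red t u) → HasLam B t → Conc Γ A B := by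
  intro n
  induction n using Nat.strong_induction_on with
  | _ n IH =>
    have IH' : ∀ t', sizeT t' < n → ∀ Γ A B, Typing Γ t' A → (∀ u, ¬ Red t' u) →
        HasLam B t' → Conc Γ A B :=
      fun t' h Γ A B => IH (sizeT t') h t' Γ A B (le_refl _)
    intro t Γ A B hle ht hnf hb
    cases t with
    | var m => exact hb.elim
    | app u v =>
      exact Or.inr ((neutral_aux n IH' Γ (.app u v) A hle ht hnf trivial).2 B hb)
    | proj b u =>
      exact Or.inr ((neutral_aux n IH' Γ (.proj b u) A hle ht hnf trivial).2 B hb)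
    | lam A0 s =>
      cases ht with
      | lam hts =>
        rename_i B0
        have hnf_s : ∀ u', ¬ Red s u' := fun u' r => hnf _ (Red.lam r)
        have hles : sizeT s < n := by simp [sizeT] at hle; omega
        rcases hb with rfl | hb
        · exact Or.inl ⟨.imp A0 B0, prime_factor_self trivial,
            properSub_of (.impL (.refl _)) (by simp [Formula.size])⟩
        · rcases IH' s hles (A0 :: Γ) B0 B hts hnf_s hb with ⟨P, hPF, hBP⟩ | ⟨Ai, hmem, hSS⟩
          · obtain ⟨hPD, _⟩ := primeFactor_sub hPF
            refine Or.inl ⟨.imp A0 B0, prime_factor_self trivial,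
              properSub_of (.impR (sub_trans hBP.1 hPD)) ?_⟩
            have h1 := sub_size_lt hBP.1 hBP.2
            have h2 := sub_size hPD
            simp [Formula.size]; omega
          · rcases List.mem_cons.mp hmem with rfl | hmem'
            · obtain ⟨Q, _, hQA, hBQ⟩ := hSS
              refine Or.inl ⟨.imp Ai B0, prime_factor_self trivial,
                properSub_of (.impL (sub_trans hBQ.1 hQA.1)) ?_⟩
              have h1 := sub_size_lt hBQ.1 hBQ.2
              have h2 := sub_size_lt hQA.1 hQA.2
              simp [Formula.size]; omega
            · exact Or.inr ⟨Ai, hmem', hSS⟩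
    | pair u v =>
      cases ht with
      | pair htu htv =>
        rename_i A1 A2
        have hnf_u : ∀ u', ¬ Red u u' := fun u' r => hnf _ (Red.pairL r)
        have hnf_v : ∀ v', ¬ Red v v' := fun v' r => hnf _ (Red.pairR r)
        have hleu : sizeT u < n := by simp [sizeT] at hle; omega
        have hlev : sizeT v < n := by simp [sizeT] at hle; omega
        rcases hb with hb | hb
        · rcases IH' u hleu Γ A1 B htu hnf_u hb with ⟨P, hPF, hBP⟩ | h
          · refine Or.inl ⟨P, primeFactor_iff_mem.mpr ?_, hBP⟩
            exact List.mem_append.mpr (Or.inl (primeFactor_iff_mem.mp hPF))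
          · exact Or.inr h
        · rcases IH' v hlev Γ A2 B htv hnf_v hb with ⟨P, hPF, hBP⟩ | h
          · refine Or.inl ⟨P, primeFactor_iff_mem.mpr ?_, hBP⟩
            exact List.mem_append.mpr (Or.inr (primeFactor_iff_mem.mp hPF))
          · exact Or.inr h
    | efq P0 s =>
      cases ht with
      | efq hat hne hts =>
        have hnf_s : ∀ u', ¬ Red s u' := fun u' r => hnf _ (Red.efq r)
        have hles : sizeT s < n := by simp [sizeT] at hle; omega
        rcases IH' s hles Γ .bot B hts hnf_s hb with ⟨P, hPF, hBP⟩ | h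
        · have hm := primeFactor_iff_mem.mp hPF
          simp [primeFactors] at hm
          subst hm
          cases hBP.1 with
          | refl => exact absurd rfl hBP.2
        · exact Or.inr h

/-- bound hypothesis property for normal simply typed λ-terms. -/
theorem bound_hypothesis_property (Γ : List Formula) (t : Term) (A B : Formula)
    (ht : Typing Γ t A) (hnf : ∀ u, ¬ Red t u) (hb : HasLam B t) :
    (∃ P, PrimeFactor P A ∧ ProperSub B P) ∨ ∃ Ai ∈ Γ, StrongSub B Ai :=
  main_aux (sizeT t) t Γ A B (le_refl _) ht hnf hb
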